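/- Let μ be a probability measure on Ω, let Xᵢ, Xⱼ be Boolean sensitivity indicators with μ(Xᵢ = a ∧ Xⱼ = b) > 0 for all a, b ∈ {0,1}. Let Mᵢ be the OSDPRR release indicator with parameter εᵢ > 0 for Xᵢ and Mⱼ the OSDPRR release indicator with parameter εⱼ > 0 for Xⱼ. Assume Mᵢ is conditionally independent of Xⱼ given Xᵢ, and Mⱼ is conditionally independent of Mᵢ given Xⱼ. Set δ₁ = P(Xᵢ = 0 | Xⱼ = 0), δ₂ = P(Xᵢ = 0 | Xⱼ = 1), and f₁(εᵢ) = (δ₁(e^{εᵢ} − 1) + 1)/(δ₂(e^{εᵢ} − 1) + 1). Then P(Xⱼ = 0 | Mᵢ = 0 ∧ Mⱼ = 0) / P(Xⱼ = 1 | Mᵢ = 0 ∧ Mⱼ = 0) = f₁(εᵢ) · e^{εⱼ} · μ(Xⱼ = 0) / μ(Xⱼ = 1). -/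

import Mathlib

/-! Under OSDPRR a sensitive record is always suppressed and a non-sensitive one with probability
`e^{-ε}`. The two conditional independences let these suppression probabilities be multiplied into
the joint law of `(Xᵢ, Xⱼ)`:
`μ(Mᵢ = 0, Mⱼ = 0, Xⱼ = b) = e^{-b εⱼ} (μ(Xᵢ = 0, Xⱼ = b) + e^{-εᵢ} μ(Xᵢ = 1, Xⱼ = b))`.
The normalising factor `μ(Mᵢ = 0, Mⱼ = 0)` cancels from the posterior odds, and multiplying
numerator and denominator by `e^{εᵢ + εⱼ}` gives `f₁(εᵢ) e^{εⱼ}` times the prior odds. -/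

open MeasureTheory Real

/-- Conditional probability `P(A | B) = μ(A ∩ B) / μ(B)`, as a real number. -/
noncomputable def condProb {Ω : Type*} [MeasurableSpace Ω] (μ : Measure Ω) (A B : Set Ω) : ℝ :=
  (μ (A ∩ B)).toReal / (μ B).toReal

section

variable {Ω : Type*} [MeasurableSpace Ω] {μ : Measure Ω} [IsFiniteMeasure μ]

theorem condProb_div_condProb (A B C : Set Ω) :
    condProb μ A C / condProb μ B C = μ.real (A ∩ C) / μ.real (B ∩ C) := by
  simp only [condProb, ← measureReal_def]
  by_cases hC : μ.real C = 0
  · rw [measureReal_mono_null Set.inter_subset_right hC,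
      measureReal_mono_null Set.inter_subset_right hC]
    simp
  · exact div_div_div_cancel_right₀ hC _ _

theorem measureReal_bool_split {f : Ω → Bool} (hf : Measurable f) (p : Ω → Prop) :
    μ.real {ω | f ω = false ∧ p ω} + μ.real {ω | f ω = true ∧ p ω} = μ.real {ω | p ω} := by
  have hsdiff : {ω | p ω} \ {ω | f ω = true} = {ω | f ω = false ∧ p ω} := by
    ext ω
    simp [and_comm]
  have ht : MeasurableSet {ω | f ω = true} := hf (measurableSet_singleton true)
  rw [← measureReal_inter_add_sdiff (s := {ω | p ω}) ht, hsdiff, Set.inter_comm, add_comm]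
  rfl

/-- Conditional independence of `A` and `B` given `C`, read with `s = A ∩ B ∩ C`, `t = A ∩ C`,
`u = B ∩ C`. -/
theorem measureReal_eq_mul_of_condIndep {s t u c : Set Ω} {κ : ℝ}
    (hCI : μ s * μ c = μ t * μ u) (ht : μ.real t = κ * μ.real c) (hc : μ c ≠ 0) :
    μ.real s = κ * μ.real u := by
  have hCI' := congrArg ENNReal.toReal hCI
  simp only [ENNReal.toReal_mul, ← measureReal_def, ht] at hCI'
  have hc' : μ.real c ≠ 0 := (measureReal_eq_zero_iff).not.mpr hc
  exact mul_right_cancel₀ hc' (by rw [hCI']; ring)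

end

namespace OSDPRR

variable {Ω : Type*} [MeasurableSpace Ω]

structure IsRelease (μ : Measure Ω) (M X : Ω → Bool) (ε : ℝ) : Prop where
  sensitive_released : μ {ω | M ω = true ∧ X ω = false} = 0
  nonsensitive_released : (μ {ω | M ω = true ∧ X ω = true}).toReal
      = (1 - exp (-ε)) * (μ {ω | X ω = true}).toReal

noncomputable def suppressProb (ε : ℝ) : Bool → ℝ
  | false => 1
  | true => exp (-ε)

variable {μ : Measure Ω} [IsFiniteMeasure μ]

theorem IsRelease.measureReal_suppressed {M X : Ω → Bool} {ε : ℝ} (h : IsRelease μ M X ε)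
    (hM : Measurable M) (a : Bool) :
    μ.real {ω | M ω = false ∧ X ω = a} = suppressProb ε a * μ.real {ω | X ω = a} := by
  have hsplit := measureReal_bool_split (μ := μ) hM (fun ω => X ω = a)
  cases a
  · have h0 : μ.real {ω | M ω = true ∧ X ω = false} = 0 := by
      simp [measureReal_def, h.sensitive_released]
    simp only [suppressProb]
    linarith
  · have h1 := h.nonsensitive_released
    simp only [suppressProb, ← measureReal_def] at h1 ⊢
    linarith

theorem IsRelease.measureReal_suppressed_and {Mi Xi Xj : Ω → Bool} {ε : ℝ}
    (h : IsRelease μ Mi Xi ε) (hMi : Measurable Mi) (hXi : Measurable Xi)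
    (hXi_pos : ∀ a, μ {ω | Xi ω = a} ≠ 0)
    (hCI : ∀ a b : Bool, μ {ω | Mi ω = false ∧ Xi ω = a ∧ Xj ω = b} * μ {ω | Xi ω = a}
        = μ {ω | Mi ω = false ∧ Xi ω = a} * μ {ω | Xi ω = a ∧ Xj ω = b}) (b : Bool) :
    μ.real {ω | Mi ω = false ∧ Xj ω = b}
      = μ.real {ω | Xi ω = false ∧ Xj ω = b} + exp (-ε) * μ.real {ω | Xi ω = true ∧ Xj ω = b} := by
  have hsplit := measureReal_bool_split (μ := μ) hXi (fun ω => Mi ω = false ∧ Xj ω = b)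
  have hcomm : ∀ a, {ω | Xi ω = a ∧ Mi ω = false ∧ Xj ω = b}
      = {ω | Mi ω = false ∧ Xi ω = a ∧ Xj ω = b} := fun _ => Set.ext fun _ => and_left_comm
  rw [← hsplit, hcomm, hcomm,
    measureReal_eq_mul_of_condIndep (hCI false b) (h.measureReal_suppressed hMi false) (hXi_pos _),
    measureReal_eq_mul_of_condIndep (hCI true b) (h.measureReal_suppressed hMi true) (hXi_pos _),
    suppressProb, suppressProb, one_mul]

theorem suppressed_odds_eq {p₀₀ p₁₀ p₀₁ p₁₁ : ℝ} (h₀₀ : 0 < p₀₀) (h₁₀ : 0 < p₁₀) (h₀₁ : 0 < p₀₁)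
    (h₁₁ : 0 < p₁₁) (εi εj : ℝ) :
    (p₀₀ + exp (-εi) * p₁₀) / (exp (-εj) * (p₀₁ + exp (-εi) * p₁₁))
      = (p₀₀ / (p₀₀ + p₁₀) * (exp εi - 1) + 1) / (p₀₁ / (p₀₁ + p₁₁) * (exp εi - 1) + 1)
        * exp εj * ((p₀₀ + p₁₀) / (p₀₁ + p₁₁)) := by
  have h₁ : p₀₁ / (p₀₁ + p₁₁) * (exp εi - 1) + 1 = (exp εi * p₀₁ + p₁₁) / (p₀₁ + p₁₁) := by
    field_simp
    ring
  have h₀ : p₀₀ / (p₀₀ + p₁₀) * (exp εi - 1) + 1 = (exp εi * p₀₀ + p₁₀) / (p₀₀ + p₁₀) := by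
    field_simp
    ring
  rw [h₀, h₁, exp_neg, exp_neg]
  field_simp

end OSDPRR

theorem osdprr_colluding_both_suppressed_general {Ω : Type*} [MeasurableSpace Ω]
    (μ : Measure Ω) [IsProbabilityMeasure μ]
    (Xi Xj Mi Mj : Ω → Bool)
    (hXi : Measurable Xi)
    (hMi : Measurable Mi) (hMj : Measurable Mj)
    (εi εj : ℝ)
    (hpos : ∀ a b : Bool, 0 < μ {ω | Xi ω = a ∧ Xj ω = b})
    -- OSDPRR with parameter εᵢ for Xᵢ
    (hreli0 : μ {ω | Mi ω = true ∧ Xi ω = false} = 0)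
    (hreli1 : (μ {ω | Mi ω = true ∧ Xi ω = true}).toReal
        = (1 - Real.exp (-εi)) * (μ {ω | Xi ω = true}).toReal)
    -- OSDPRR with parameter εⱼ for Xⱼ
    (hrelj0 : μ {ω | Mj ω = true ∧ Xj ω = false} = 0)
    (hrelj1 : (μ {ω | Mj ω = true ∧ Xj ω = true}).toReal
        = (1 - Real.exp (-εj)) * (μ {ω | Xj ω = true}).toReal)
    -- conditional independence of Mᵢ and Xⱼ given Xᵢ
    (hCIi : ∀ m a b : Bool,
      μ {ω | Mi ω = m ∧ Xi ω = a ∧ Xj ω = b} * μ {ω | Xi ω = a}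
        = μ {ω | Mi ω = m ∧ Xi ω = a} * μ {ω | Xi ω = a ∧ Xj ω = b})
    -- conditional independence of Mⱼ and Mᵢ given Xⱼ
    (hCIj : ∀ m m' b : Bool,
      μ {ω | Mj ω = m ∧ Mi ω = m' ∧ Xj ω = b} * μ {ω | Xj ω = b}
        = μ {ω | Mj ω = m ∧ Xj ω = b} * μ {ω | Mi ω = m' ∧ Xj ω = b}) :
    condProb μ {ω | Xj ω = false} {ω | Mi ω = false ∧ Mj ω = false}
        / condProb μ {ω | Xj ω = true} {ω | Mi ω = false ∧ Mj ω = false}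
      = ((condProb μ {ω | Xi ω = false} {ω | Xj ω = false} * (Real.exp εi - 1) + 1)
          / (condProb μ {ω | Xi ω = false} {ω | Xj ω = true} * (Real.exp εi - 1) + 1))
        * Real.exp εj
        * ((μ {ω | Xj ω = false}).toReal / (μ {ω | Xj ω = true}).toReal) := by
  have hi : OSDPRR.IsRelease μ Mi Xi εi := ⟨hreli0, hreli1⟩
  have hj : OSDPRR.IsRelease μ Mj Xj εj := ⟨hrelj0, hrelj1⟩
  have hXi_pos : ∀ a, μ {ω | Xi ω = a} ≠ 0 := fun a =>
    ((hpos a false).trans_le (measure_mono fun _ h => h.1)).ne'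
  have hXj_pos : ∀ b, μ {ω | Xj ω = b} ≠ 0 := fun b =>
    ((hpos false b).trans_le (measure_mono fun _ h => h.2)).ne'
  have hjoint : ∀ b, μ.real {ω | Mj ω = false ∧ Mi ω = false ∧ Xj ω = b}
      = OSDPRR.suppressProb εj b * (μ.real {ω | Xi ω = false ∧ Xj ω = b}
        + exp (-εi) * μ.real {ω | Xi ω = true ∧ Xj ω = b}) := fun b => by
    rw [measureReal_eq_mul_of_condIndep (hCIj false false b)
      (hj.measureReal_suppressed hMj b) (hXj_pos b),
      hi.measureReal_suppressed_and hMi hXi hXi_pos (hCIi false) b]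
  have hinter : ∀ b, {ω | Xj ω = b} ∩ {ω | Mi ω = false ∧ Mj ω = false}
      = {ω | Mj ω = false ∧ Mi ω = false ∧ Xj ω = b} := fun b => Set.ext fun _ => by
    simp only [Set.mem_inter_iff, Set.mem_ofPred_eq]
    tauto
  have hXj_marginal : ∀ b, μ.real {ω | Xj ω = b}
      = μ.real {ω | Xi ω = false ∧ Xj ω = b} + μ.real {ω | Xi ω = true ∧ Xj ω = b} :=
    fun b => (measureReal_bool_split hXi _).symm
  have hposR : ∀ a b, 0 < μ.real {ω | Xi ω = a ∧ Xj ω = b} := fun a b =>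
    ENNReal.toReal_pos (hpos a b).ne' (measure_ne_top μ _)
  rw [condProb_div_condProb, hinter, hinter, hjoint, hjoint, OSDPRR.suppressProb,
    OSDPRR.suppressProb, one_mul]
  simp only [condProb, ← measureReal_def]
  rw [hXj_marginal, hXj_marginal]
  exact OSDPRR.suppressed_odds_eq (hposR _ _) (hposR _ _) (hposR _ _) (hposR _ _) εi εj

/-- **Theorem 4, colluding applications, neither record released.** With
`δ₁ = P(Xᵢ = 0 | Xⱼ = 0)`, `δ₂ = P(Xᵢ = 0 | Xⱼ = 1)` and
`f₁(εᵢ) = (δ₁(e^{εᵢ}−1)+1)/(δ₂(e^{εᵢ}−1)+1)`, the posterior odds of `Xⱼ` given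
`Mᵢ = 0, Mⱼ = 0` equal `f₁(εᵢ)·e^{εⱼ}` times the prior odds. -/
theorem osdprr_colluding_both_suppressed {Ω : Type*} [MeasurableSpace Ω]
    (μ : Measure Ω) [IsProbabilityMeasure μ]
    (Xi Xj Mi Mj : Ω → Bool)
    (hXi : Measurable Xi) (hXj : Measurable Xj)
    (hMi : Measurable Mi) (hMj : Measurable Mj)
    (εi εj : ℝ) (hεi : 0 < εi) (hεj : 0 < εj)
    (hpos : ∀ a b : Bool, 0 < μ {ω | Xi ω = a ∧ Xj ω = b})
    -- OSDPRR with parameter εᵢ for Xᵢ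
    (hreli0 : μ {ω | Mi ω = true ∧ Xi ω = false} = 0)
    (hreli1 : (μ {ω | Mi ω = true ∧ Xi ω = true}).toReal
        = (1 - Real.exp (-εi)) * (μ {ω | Xi ω = true}).toReal)
    -- OSDPRR with parameter εⱼ for Xⱼ
    (hrelj0 : μ {ω | Mj ω = true ∧ Xj ω = false} = 0)
    (hrelj1 : (μ {ω | Mj ω = true ∧ Xj ω = true}).toReal
        = (1 - Real.exp (-εj)) * (μ {ω | Xj ω = true}).toReal)
    -- conditional independence of Mᵢ and Xⱼ given Xᵢ
    (hCIi : ∀ m a b : Bool,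
      μ {ω | Mi ω = m ∧ Xi ω = a ∧ Xj ω = b} * μ {ω | Xi ω = a}
        = μ {ω | Mi ω = m ∧ Xi ω = a} * μ {ω | Xi ω = a ∧ Xj ω = b})
    -- conditional independence of Mⱼ and Mᵢ given Xⱼ
    (hCIj : ∀ m m' b : Bool,
      μ {ω | Mj ω = m ∧ Mi ω = m' ∧ Xj ω = b} * μ {ω | Xj ω = b}
        = μ {ω | Mj ω = m ∧ Xj ω = b} * μ {ω | Mi ω = m' ∧ Xj ω = b}) :
    condProb μ {ω | Xj ω = false} {ω | Mi ω = false ∧ Mj ω = false}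
        / condProb μ {ω | Xj ω = true} {ω | Mi ω = false ∧ Mj ω = false}
      = ((condProb μ {ω | Xi ω = false} {ω | Xj ω = false} * (Real.exp εi - 1) + 1)
          / (condProb μ {ω | Xi ω = false} {ω | Xj ω = true} * (Real.exp εi - 1) + 1))
        * Real.exp εj
        * ((μ {ω | Xj ω = false}).toReal / (μ {ω | Xj ω = true}).toReal) :=
  osdprr_colluding_both_suppressed_general μ Xi Xj Mi Mj hXi hMi hMj εi εj hpos hreli0 hreli1 hrelj0
    hrelj1 hCIi hCIj
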